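/- Uniform boundedness of the auxiliary variable: if (U^{k+1}, P^{k+1/2}, Q^{k+1}) solve the fully discrete SAV-MAC scheme for k=0,…,n, then there is a constant C depending only on ν and Ω (through the discrete Poincaré inequality) such that |Q^{n+1}|² + (ν/2) Σ_{k=0}^{n} Δt ‖DU^{k+1/2}‖² ≤ |Q⁰|² + C Σ_{k=0}^{n} Δt ‖f^{k+1/2}‖²_{l²}; in particular |Q^{n+1}| is bounded independently of h, k, Δt and n (0 ≤ n ≤ N−1 with NΔt = T). -/
import Mathlib


open Finset

noncomputable section

namespace SAVMAC

/-- A staggered-grid function, indexed by (possibly extended) integer indices.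
For a `u1`-type function, `f i j` is the value at `(x_i, y_{j+1/2})` (with the
boundary conventions `y_{-1/2} = y_0`, `y_{N_y+1/2} = y_{N_y}` for `j = -1, N_y`).
For a `u2`-type function, `f i j` is the value at `(x_{i+1/2}, y_j)` (with
`x_{-1/2} = x_0`, `x_{N_x+1/2} = x_{N_x}` for `i = -1, N_x`).
For a cell-centered function, `f i j` is the value at `(x_{i+1/2}, y_{j+1/2})`. -/
abbrev G := ℤ → ℤ → ℝ

/-- The mesh weight `k_j` (`= k` in the interior, `k/2` at the boundary). -/
def kw (Ny : ℕ) (k : ℝ) (j : ℤ) : ℝ := if j = 0 ∨ j = (Ny : ℤ) then k / 2 else k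

/-- The mesh weight `h_i`. -/
def hw (Nx : ℕ) (h : ℝ) (i : ℤ) : ℝ := if i = 0 ∨ i = (Nx : ℤ) then h / 2 else h

/-- The inner product `(f,g)_{l²,M}` of cell-centered functions. -/
def ipM (Nx Ny : ℕ) (h k : ℝ) (f g : G) : ℝ :=
  ∑ i ∈ Finset.range Nx, ∑ j ∈ Finset.range Ny, h * k * f (i : ℤ) (j : ℤ) * g (i : ℤ) (j : ℤ)

/-- The inner product `(f,g)_{l²,T,M}` of `u1`-type functions. -/
def ipTM (Nx Ny : ℕ) (h k : ℝ) (f g : G) : ℝ :=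
  ∑ i ∈ Finset.Ico 1 Nx, ∑ j ∈ Finset.range Ny, h * k * f (i : ℤ) (j : ℤ) * g (i : ℤ) (j : ℤ)

/-- The inner product `(f,g)_{l²,M,T}` of `u2`-type functions. -/
def ipMT (Nx Ny : ℕ) (h k : ℝ) (f g : G) : ℝ :=
  ∑ i ∈ Finset.range Nx, ∑ j ∈ Finset.Ico 1 Ny, h * k * f (i : ℤ) (j : ℤ) * g (i : ℤ) (j : ℤ)

/-- The inner product `(f,g)_{l²,T_y}` of functions living at the nodes `(x_i, y_j)`,
`1 ≤ i ≤ N_x-1`, `0 ≤ j ≤ N_y`. -/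
def ipTy (Nx Ny : ℕ) (h k : ℝ) (f g : G) : ℝ :=
  ∑ i ∈ Finset.Ico 1 Nx, ∑ j ∈ Finset.range (Ny + 1), h * kw Ny k j * f (i : ℤ) (j : ℤ) * g (i : ℤ) (j : ℤ)

/-- The inner product `(f,g)_{l²,T_x}` of functions living at the nodes `(x_i, y_j)`,
`0 ≤ i ≤ N_x`, `1 ≤ j ≤ N_y-1`. -/
def ipTx (Nx Ny : ℕ) (h k : ℝ) (f g : G) : ℝ :=
  ∑ i ∈ Finset.range (Nx + 1), ∑ j ∈ Finset.Ico 1 Ny, hw Nx h i * k * f (i : ℤ) (j : ℤ) * g (i : ℤ) (j : ℤ)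

/-- `‖U‖²_{l²}` for a velocity pair. -/
def l2sq (Nx Ny : ℕ) (h k : ℝ) (v1 v2 : G) : ℝ :=
  ipTM Nx Ny h k v1 v1 + ipMT Nx Ny h k v2 v2

/-- `(U,V)_{l²}` for velocity pairs. -/
def ipl2 (Nx Ny : ℕ) (h k : ℝ) (v1 v2 w1 w2 : G) : ℝ :=
  ipTM Nx Ny h k v1 w1 + ipMT Nx Ny h k v2 w2

/-- `d_x`: half-index difference in `x`, `[d_x f]_{i+1/2,m} = (f_{i+1,m}-f_{i,m})/h`. -/
def dX (h : ℝ) (f : G) : G := fun i j => (f (i + 1) j - f i j) / h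

/-- `d_y`: half-index difference in `y`. -/
def dY (k : ℝ) (f : G) : G := fun i j => (f i (j + 1) - f i j) / k

/-- `D_x`: integer-index difference in `x`, `[D_x f]_{i,m} = (f_{i+1/2,m}-f_{i-1/2,m})/h_i`. -/
def DX (Nx : ℕ) (h : ℝ) (f : G) : G := fun i j => (f i j - f (i - 1) j) / hw Nx h i

/-- `D_y`: integer-index difference in `y`. -/
def DY (Ny : ℕ) (k : ℝ) (f : G) : G := fun i j => (f i j - f i (j - 1)) / kw Ny k j

/-- `D_x(d_x f)` at a `u1`-node. -/
def DXdX (h : ℝ) (f : G) : G := fun i j => (f (i + 1) j - 2 * f i j + f (i - 1) j) / h ^ 2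

/-- `d_y(D_y f)` at a `u1`-node (with the half-cell convention at the boundary). -/
def dYDY (Ny : ℕ) (k : ℝ) (f : G) : G := fun i j => (DY Ny k f i (j + 1) - DY Ny k f i j) / k

/-- `D_y(d_y f)` at a `u2`-node. -/
def DYdY (k : ℝ) (f : G) : G := fun i j => (f i (j + 1) - 2 * f i j + f i (j - 1)) / k ^ 2

/-- `d_x(D_x f)` at a `u2`-node (with the half-cell convention at the boundary). -/
def dXDX (Nx : ℕ) (h : ℝ) (f : G) : G := fun i j => (DX Nx h f (i + 1) j - DX Nx h f i j) / h

/-- `‖DU‖²` for a velocity pair. -/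
def Dsq (Nx Ny : ℕ) (h k : ℝ) (v1 v2 : G) : ℝ :=
  ipM Nx Ny h k (dX h v1) (dX h v1) + ipTy Nx Ny h k (DY Ny k v1) (DY Ny k v1)
    + ipTx Nx Ny h k (DX Nx h v2) (DX Nx h v2) + ipM Nx Ny h k (dY k v2) (dY k v2)

/-- Homogeneous Dirichlet boundary conditions for a staggered velocity pair. -/
def BC (Nx Ny : ℕ) (v1 v2 : G) : Prop :=
  (∀ j : ℤ, v1 0 j = 0 ∧ v1 (Nx : ℤ) j = 0) ∧
  (∀ i : ℤ, v1 i (-1) = 0 ∧ v1 i (Ny : ℤ) = 0) ∧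
  (∀ j : ℤ, v2 (-1) j = 0 ∧ v2 (Nx : ℤ) j = 0) ∧
  (∀ i : ℤ, v2 i 0 = 0 ∧ v2 i (Ny : ℤ) = 0)

/-- Discrete incompressibility `d_x v1 + d_y v2 = 0` at all cell centers. -/
def DivFree (Nx Ny : ℕ) (h k : ℝ) (v1 v2 : G) : Prop :=
  ∀ i j : ℤ, 0 ≤ i → i < (Nx : ℤ) → 0 ≤ j → j < (Ny : ℤ) →
    dX h v1 i j + dY k v2 i j = 0

/-- The value of the bilinear interpolant `P_h f` of a `u1`-type function at the integer
node `(x_i, y_j)` (respecting the boundary half-cells). -/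
def avgY (Ny : ℕ) (f : G) : G := fun i j =>
  if j = 0 then f i (-1) else if j = (Ny : ℤ) then f i (Ny : ℤ) else (f i (j - 1) + f i j) / 2

/-- The value of the bilinear interpolant `P_h f` of a `u2`-type function at the integer
node `(x_i, y_j)` (respecting the boundary half-cells). -/
def avgX (Nx : ℕ) (f : G) : G := fun i j =>
  if i = 0 then f (-1) j else if i = (Nx : ℤ) then f (Nx : ℤ) j else (f (i - 1) j + f i j) / 2

/-- First component of the explicit nonlinear term
`Ũ₁ D_x(P_h Ũ₁) + P_h Ũ₂ d_y(P_h Ũ₁)` at the `u1`-node `(x_i, y_{j+1/2})`. -/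
def N1 (Ny : ℕ) (h k : ℝ) (w1 w2 : G) : G := fun i j =>
  w1 i j * ((w1 (i + 1) j - w1 (i - 1) j) / (2 * h)) +
    ((w2 (i - 1) j + w2 i j + w2 (i - 1) (j + 1) + w2 i (j + 1)) / 4) *
      ((avgY Ny w1 i (j + 1) - avgY Ny w1 i j) / k)

/-- Second component of the explicit nonlinear term
`P_h Ũ₁ d_x(P_h Ũ₂) + Ũ₂ D_y(P_h Ũ₂)` at the `u2`-node `(x_{i+1/2}, y_j)`. -/
def N2 (Nx : ℕ) (h k : ℝ) (w1 w2 : G) : G := fun i j =>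
  ((w1 i (j - 1) + w1 (i + 1) (j - 1) + w1 i j + w1 (i + 1) j) / 4) *
      ((avgX Nx w2 (i + 1) j - avgX Nx w2 i j) / h) +
    w2 i j * ((w2 i (j + 1) - w2 i (j - 1)) / (2 * k))

/-- `B^{n+1/2} = √(E_h(Ũ^{n+1/2}) + δ)`. -/
def Bh (Nx Ny : ℕ) (h k δ : ℝ) (w1 w2 : G) : ℝ :=
  Real.sqrt (l2sq Nx Ny h k w1 w2 / 2 + δ)

/-- One step of the fully discrete SAV-MAC scheme: given the extrapolated velocity
`Ũ^{n+1/2} = (w1,w2)`, the old velocity `U^n = (u1,u2)` and old SAV value `Qn`, the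
data `f^{n+1/2} = (f1,f2)`, the new iterate `U^{n+1} = (v1,v2)`, `P^{n+1/2} = P`,
`Q^{n+1} = Qn1` satisfies the momentum equations, the SAV update, discrete
incompressibility and the boundary conditions; moreover `Q^{n+1/2} ≠ 0`. -/
def SchemeStep (Nx Ny : ℕ) (h k Δt ν δ : ℝ) (f1 f2 w1 w2 u1 u2 v1 v2 P : G)
    (Qn Qn1 : ℝ) : Prop :=
  (Qn + Qn1) / 2 ≠ 0 ∧
  (∀ i j : ℤ, 1 ≤ i → i < (Nx : ℤ) → 0 ≤ j → j < (Ny : ℤ) →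
    (v1 i j - u1 i j) / Δt
      + ((Qn + Qn1) / 2 / Bh Nx Ny h k δ w1 w2) * N1 Ny h k w1 w2 i j
      - ν * DXdX h (fun a b => (u1 a b + v1 a b) / 2) i j
      - ν * dYDY Ny k (fun a b => (u1 a b + v1 a b) / 2) i j
      + DX Nx h P i j = f1 i j) ∧
  (∀ i j : ℤ, 0 ≤ i → i < (Nx : ℤ) → 1 ≤ j → j < (Ny : ℤ) →
    (v2 i j - u2 i j) / Δt
      + ((Qn + Qn1) / 2 / Bh Nx Ny h k δ w1 w2) * N2 Nx h k w1 w2 i j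
      - ν * DYdY k (fun a b => (u2 a b + v2 a b) / 2) i j
      - ν * dXDX Nx h (fun a b => (u2 a b + v2 a b) / 2) i j
      + DY Ny k P i j = f2 i j) ∧
  ((Qn1 - Qn) / Δt
      = (1 / (2 * Bh Nx Ny h k δ w1 w2)) *
          ipl2 Nx Ny h k (N1 Ny h k w1 w2) (N2 Nx h k w1 w2)
            (fun a b => (u1 a b + v1 a b) / 2) (fun a b => (u2 a b + v2 a b) / 2)
        + (1 / (2 * ((Qn + Qn1) / 2))) *
          ipl2 Nx Ny h k (fun a b => (v1 a b - u1 a b) / Δt) (fun a b => (v2 a b - u2 a b) / Δt)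
            (fun a b => (u1 a b + v1 a b) / 2) (fun a b => (u2 a b + v2 a b) / 2)) ∧
  DivFree Nx Ny h k v1 v2 ∧
  BC Nx Ny v1 v2

-- AUX START
lemma abel1 (n : ℕ) (P V : ℤ → ℝ) (hV0 : V 0 = 0) (hVn : V (n:ℤ) = 0) :
    ∑ i ∈ Finset.Ico 1 n, (P (i:ℤ) - P ((i:ℤ)-1)) * V (i:ℤ)
      = -∑ i ∈ Finset.range n, P (i:ℤ) * (V ((i:ℤ)+1) - V (i:ℤ)) := by
  have tel : ∑ i ∈ Finset.range n,
      (P (((i:ℤ)+1)-1) * V ((i:ℤ)+1) - P ((i:ℤ)-1) * V (i:ℤ))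
      = P ((n:ℤ)-1) * V (n:ℤ) - P ((0:ℤ)-1) * V 0 := by
    have := Finset.sum_range_sub (f := fun i => P ((i:ℤ)-1) * V (i:ℤ)) n
    simpa [Nat.cast_succ] using this
  have hsplit : ∑ i ∈ Finset.range n, (P (i:ℤ) - P ((i:ℤ)-1)) * V (i:ℤ)
      = ∑ i ∈ Finset.Ico 1 n, (P (i:ℤ) - P ((i:ℤ)-1)) * V (i:ℤ) := by
    rcases Nat.eq_zero_or_pos n with h0 | h0
    · simp [h0]
    · rw [Finset.range_eq_Ico, Finset.sum_eq_sum_Ico_succ_bot h0]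
      simp [hV0]
  have key : ∑ i ∈ Finset.range n, (P (i:ℤ) - P ((i:ℤ)-1)) * V (i:ℤ)
      + ∑ i ∈ Finset.range n, P (i:ℤ) * (V ((i:ℤ)+1) - V (i:ℤ)) = 0 := by
    rw [← Finset.sum_add_distrib]
    have : ∀ i ∈ Finset.range n,
        (P (i:ℤ) - P ((i:ℤ)-1)) * V (i:ℤ) + P (i:ℤ) * (V ((i:ℤ)+1) - V (i:ℤ))
        = P (((i:ℤ)+1)-1) * V ((i:ℤ)+1) - P ((i:ℤ)-1) * V (i:ℤ) := by
      intro i _; ring_nf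
    rw [Finset.sum_congr rfl this, tel, hVn, hV0]; ring
  linarith [hsplit ▸ key]

lemma abel2 (n : ℕ) (W V : ℤ → ℝ) (hVm : V (-1) = 0) (hVn : V (n:ℤ) = 0) :
    ∑ j ∈ Finset.range n, (W ((j:ℤ)+1) - W (j:ℤ)) * V (j:ℤ)
      = -∑ j ∈ Finset.range (n+1), W (j:ℤ) * (V (j:ℤ) - V ((j:ℤ)-1)) := by
  have h1 : ∑ j ∈ Finset.range (n+1), W (j:ℤ) * V (j:ℤ)
      = ∑ j ∈ Finset.range n, W (j:ℤ) * V (j:ℤ) := by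
    rw [Finset.sum_range_succ, hVn]; ring
  have h2 : ∑ j ∈ Finset.range (n+1), W (j:ℤ) * V ((j:ℤ)-1)
      = ∑ j ∈ Finset.range n, W ((j:ℤ)+1) * V (j:ℤ) := by
    rw [Finset.sum_range_succ' (f := fun j => W (j:ℤ) * V ((j:ℤ)-1)) n]
    simp only [Nat.cast_succ, add_sub_cancel_right, Nat.cast_zero, zero_sub, hVm]
    ring
  have h3 : ∑ j ∈ Finset.range (n+1), W (j:ℤ) * (V (j:ℤ) - V ((j:ℤ)-1))
      = ∑ j ∈ Finset.range n, W (j:ℤ) * V (j:ℤ)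
        - ∑ j ∈ Finset.range n, W ((j:ℤ)+1) * V (j:ℤ) := by
    rw [← h1, ← h2, ← Finset.sum_sub_distrib]
    exact Finset.sum_congr rfl (fun j _ => by ring)
  rw [h3, neg_sub, ← Finset.sum_sub_distrib]
  exact Finset.sum_congr rfl (fun j _ => by ring)

lemma kw_ne (Ny : ℕ) {k : ℝ} (hk : k ≠ 0) (j : ℤ) : kw Ny k j ≠ 0 := by
  unfold kw; split <;> simp [hk]

lemma hw_ne (Nx : ℕ) {h : ℝ} (hh : h ≠ 0) (i : ℤ) : hw Nx h i ≠ 0 := by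
  unfold hw; split <;> simp [hh]

lemma visc_x (Nx Ny : ℕ) {h : ℝ} (k : ℝ) (hh : h ≠ 0) (v1 : G)
    (h0 : ∀ j : ℤ, v1 0 j = 0) (hN : ∀ j : ℤ, v1 (Nx:ℤ) j = 0) :
    ipTM Nx Ny h k (DXdX h v1) v1 = - ipM Nx Ny h k (dX h v1) (dX h v1) := by
  unfold ipTM ipM
  rw [Finset.sum_comm, Finset.sum_comm (s := Finset.range Nx), ← Finset.sum_neg_distrib]
  refine Finset.sum_congr rfl (fun j _ => ?_)
  calc ∑ i ∈ Finset.Ico 1 Nx, h * k * DXdX h v1 (i:ℤ) (j:ℤ) * v1 (i:ℤ) (j:ℤ)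
      = ∑ i ∈ Finset.Ico 1 Nx,
          (((fun i' : ℤ => k / h * (v1 (i'+1) (j:ℤ) - v1 i' (j:ℤ))) (i:ℤ))
            - ((fun i' : ℤ => k / h * (v1 (i'+1) (j:ℤ) - v1 i' (j:ℤ))) ((i:ℤ)-1)))
            * v1 (i:ℤ) (j:ℤ) := by
        refine Finset.sum_congr rfl (fun i _ => ?_)
        simp only [DXdX, sub_add_cancel]
        field_simp
        ring
    _ = -∑ i ∈ Finset.range Nx,
          ((fun i' : ℤ => k / h * (v1 (i'+1) (j:ℤ) - v1 i' (j:ℤ))) (i:ℤ))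
            * (v1 ((i:ℤ)+1) (j:ℤ) - v1 (i:ℤ) (j:ℤ)) :=
        abel1 Nx (fun i' : ℤ => k / h * (v1 (i'+1) (j:ℤ) - v1 i' (j:ℤ))) (fun i' => v1 i' (j:ℤ)) (h0 j) (hN j)
    _ = -∑ i ∈ Finset.range Nx, h * k * dX h v1 (i:ℤ) (j:ℤ) * dX h v1 (i:ℤ) (j:ℤ) := by
        rw [neg_inj]
        refine Finset.sum_congr rfl (fun i _ => ?_)
        simp only [dX]
        field_simp
lemma visc_y1 (Nx Ny : ℕ) (h : ℝ) {k : ℝ} (hk : k ≠ 0) (v1 : G)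
    (hm : ∀ i : ℤ, v1 i (-1) = 0) (hN : ∀ i : ℤ, v1 i (Ny:ℤ) = 0) :
    ipTM Nx Ny h k (dYDY Ny k v1) v1 = - ipTy Nx Ny h k (DY Ny k v1) (DY Ny k v1) := by
  unfold ipTM ipTy
  rw [← Finset.sum_neg_distrib]
  refine Finset.sum_congr rfl (fun i _ => ?_)
  calc ∑ j ∈ Finset.range Ny, h * k * dYDY Ny k v1 (i:ℤ) (j:ℤ) * v1 (i:ℤ) (j:ℤ)
      = ∑ j ∈ Finset.range Ny,
          (((fun j' : ℤ => h * DY Ny k v1 (i:ℤ) j') ((j:ℤ)+1))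
            - ((fun j' : ℤ => h * DY Ny k v1 (i:ℤ) j') (j:ℤ))) * v1 (i:ℤ) (j:ℤ) := by
        refine Finset.sum_congr rfl (fun j _ => ?_)
        simp only [dYDY]
        field_simp
    _ = -∑ j ∈ Finset.range (Ny+1),
          ((fun j' : ℤ => h * DY Ny k v1 (i:ℤ) j') (j:ℤ)) * (v1 (i:ℤ) (j:ℤ) - v1 (i:ℤ) ((j:ℤ)-1)) :=
        abel2 Ny (fun j' : ℤ => h * DY Ny k v1 (i:ℤ) j') (fun j' => v1 (i:ℤ) j') (hm i) (hN i)
    _ = -∑ j ∈ Finset.range (Ny+1),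
          h * kw Ny k (j:ℤ) * DY Ny k v1 (i:ℤ) (j:ℤ) * DY Ny k v1 (i:ℤ) (j:ℤ) := by
        rw [neg_inj]
        refine Finset.sum_congr rfl (fun j _ => ?_)
        have hkw := kw_ne Ny hk (j:ℤ)
        simp only [DY]
        field_simp

lemma visc_y2 (Nx Ny : ℕ) (h : ℝ) {k : ℝ} (hk : k ≠ 0) (v2 : G)
    (h0 : ∀ i : ℤ, v2 i 0 = 0) (hN : ∀ i : ℤ, v2 i (Ny:ℤ) = 0) :
    ipMT Nx Ny h k (DYdY k v2) v2 = - ipM Nx Ny h k (dY k v2) (dY k v2) := by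
  unfold ipMT ipM
  rw [← Finset.sum_neg_distrib]
  refine Finset.sum_congr rfl (fun i _ => ?_)
  calc ∑ j ∈ Finset.Ico 1 Ny, h * k * DYdY k v2 (i:ℤ) (j:ℤ) * v2 (i:ℤ) (j:ℤ)
      = ∑ j ∈ Finset.Ico 1 Ny,
          (((fun j' : ℤ => h / k * (v2 (i:ℤ) (j'+1) - v2 (i:ℤ) j')) (j:ℤ))
            - ((fun j' : ℤ => h / k * (v2 (i:ℤ) (j'+1) - v2 (i:ℤ) j')) ((j:ℤ)-1)))
            * v2 (i:ℤ) (j:ℤ) := by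
        refine Finset.sum_congr rfl (fun j _ => ?_)
        simp only [DYdY, sub_add_cancel]
        field_simp
        ring
    _ = -∑ j ∈ Finset.range Ny,
          ((fun j' : ℤ => h / k * (v2 (i:ℤ) (j'+1) - v2 (i:ℤ) j')) (j:ℤ))
            * (v2 (i:ℤ) ((j:ℤ)+1) - v2 (i:ℤ) (j:ℤ)) :=
        abel1 Ny (fun j' : ℤ => h / k * (v2 (i:ℤ) (j'+1) - v2 (i:ℤ) j'))
          (fun j' => v2 (i:ℤ) j') (h0 i) (hN i)
    _ = -∑ j ∈ Finset.range Ny, h * k * dY k v2 (i:ℤ) (j:ℤ) * dY k v2 (i:ℤ) (j:ℤ) := by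
        rw [neg_inj]
        refine Finset.sum_congr rfl (fun j _ => ?_)
        simp only [dY]
        field_simp

lemma visc_x2 (Nx Ny : ℕ) {h : ℝ} (k : ℝ) (hh : h ≠ 0) (v2 : G)
    (hm : ∀ j : ℤ, v2 (-1) j = 0) (hN : ∀ j : ℤ, v2 (Nx:ℤ) j = 0) :
    ipMT Nx Ny h k (dXDX Nx h v2) v2 = - ipTx Nx Ny h k (DX Nx h v2) (DX Nx h v2) := by
  unfold ipMT ipTx
  rw [Finset.sum_comm, Finset.sum_comm (s := Finset.range (Nx+1)), ← Finset.sum_neg_distrib]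
  refine Finset.sum_congr rfl (fun j _ => ?_)
  calc ∑ i ∈ Finset.range Nx, h * k * dXDX Nx h v2 (i:ℤ) (j:ℤ) * v2 (i:ℤ) (j:ℤ)
      = ∑ i ∈ Finset.range Nx,
          (((fun i' : ℤ => k * DX Nx h v2 i' (j:ℤ)) ((i:ℤ)+1))
            - ((fun i' : ℤ => k * DX Nx h v2 i' (j:ℤ)) (i:ℤ))) * v2 (i:ℤ) (j:ℤ) := by
        refine Finset.sum_congr rfl (fun i _ => ?_)
        simp only [dXDX]
        field_simp
    _ = -∑ i ∈ Finset.range (Nx+1),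
          ((fun i' : ℤ => k * DX Nx h v2 i' (j:ℤ)) (i:ℤ)) * (v2 (i:ℤ) (j:ℤ) - v2 ((i:ℤ)-1) (j:ℤ)) :=
        abel2 Nx (fun i' : ℤ => k * DX Nx h v2 i' (j:ℤ)) (fun i' => v2 i' (j:ℤ)) (hm j) (hN j)
    _ = -∑ i ∈ Finset.range (Nx+1),
          hw Nx h (i:ℤ) * k * DX Nx h v2 (i:ℤ) (j:ℤ) * DX Nx h v2 (i:ℤ) (j:ℤ) := by
        rw [neg_inj]
        refine Finset.sum_congr rfl (fun i _ => ?_)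
        have hhw := hw_ne Nx hh (i:ℤ)
        simp only [DX]
        field_simp
lemma press_x (Nx Ny : ℕ) {h : ℝ} (k : ℝ) (hh : h ≠ 0) (P v1 : G)
    (h0 : ∀ j : ℤ, v1 0 j = 0) (hN : ∀ j : ℤ, v1 (Nx:ℤ) j = 0) :
    ipTM Nx Ny h k (DX Nx h P) v1
      = -∑ j ∈ Finset.range Ny, ∑ i ∈ Finset.range Nx,
          h * k * P (i:ℤ) (j:ℤ) * dX h v1 (i:ℤ) (j:ℤ) := by
  unfold ipTM
  rw [Finset.sum_comm, ← Finset.sum_neg_distrib]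
  refine Finset.sum_congr rfl (fun j _ => ?_)
  calc ∑ i ∈ Finset.Ico 1 Nx, h * k * DX Nx h P (i:ℤ) (j:ℤ) * v1 (i:ℤ) (j:ℤ)
      = ∑ i ∈ Finset.Ico 1 Nx,
          (((fun i' : ℤ => k * P i' (j:ℤ)) (i:ℤ))
            - ((fun i' : ℤ => k * P i' (j:ℤ)) ((i:ℤ)-1))) * v1 (i:ℤ) (j:ℤ) := by
        refine Finset.sum_congr rfl (fun i hi => ?_)
        obtain ⟨hi1, hi2⟩ := Finset.mem_Ico.mp hi
        have hwe : hw Nx h (i:ℤ) = h := by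
          unfold hw
          rw [if_neg]
          push_neg
          constructor <;> [skip; skip] <;> omega
        simp only [DX, hwe]
        field_simp
    _ = -∑ i ∈ Finset.range Nx,
          ((fun i' : ℤ => k * P i' (j:ℤ)) (i:ℤ)) * (v1 ((i:ℤ)+1) (j:ℤ) - v1 (i:ℤ) (j:ℤ)) :=
        abel1 Nx (fun i' : ℤ => k * P i' (j:ℤ)) (fun i' => v1 i' (j:ℤ)) (h0 j) (hN j)
    _ = -∑ i ∈ Finset.range Nx, h * k * P (i:ℤ) (j:ℤ) * dX h v1 (i:ℤ) (j:ℤ) := by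
        rw [neg_inj]
        refine Finset.sum_congr rfl (fun i _ => ?_)
        simp only [dX]
        field_simp

lemma press_y (Nx Ny : ℕ) (h : ℝ) {k : ℝ} (hk : k ≠ 0) (P v2 : G)
    (h0 : ∀ i : ℤ, v2 i 0 = 0) (hN : ∀ i : ℤ, v2 i (Ny:ℤ) = 0) :
    ipMT Nx Ny h k (DY Ny k P) v2
      = -∑ i ∈ Finset.range Nx, ∑ j ∈ Finset.range Ny,
          h * k * P (i:ℤ) (j:ℤ) * dY k v2 (i:ℤ) (j:ℤ) := by
  unfold ipMT
  rw [← Finset.sum_neg_distrib]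
  refine Finset.sum_congr rfl (fun i _ => ?_)
  calc ∑ j ∈ Finset.Ico 1 Ny, h * k * DY Ny k P (i:ℤ) (j:ℤ) * v2 (i:ℤ) (j:ℤ)
      = ∑ j ∈ Finset.Ico 1 Ny,
          (((fun j' : ℤ => h * P (i:ℤ) j') (j:ℤ))
            - ((fun j' : ℤ => h * P (i:ℤ) j') ((j:ℤ)-1))) * v2 (i:ℤ) (j:ℤ) := by
        refine Finset.sum_congr rfl (fun j hj => ?_)
        obtain ⟨hj1, hj2⟩ := Finset.mem_Ico.mp hj
        have hkwe : kw Ny k (j:ℤ) = k := by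
          unfold kw
          rw [if_neg]
          push_neg
          constructor <;> [skip; skip] <;> omega
        simp only [DY, hkwe]
        field_simp
    _ = -∑ j ∈ Finset.range Ny,
          ((fun j' : ℤ => h * P (i:ℤ) j') (j:ℤ)) * (v2 (i:ℤ) ((j:ℤ)+1) - v2 (i:ℤ) (j:ℤ)) :=
        abel1 Ny (fun j' : ℤ => h * P (i:ℤ) j') (fun j' => v2 (i:ℤ) j') (h0 i) (hN i)
    _ = -∑ j ∈ Finset.range Ny, h * k * P (i:ℤ) (j:ℤ) * dY k v2 (i:ℤ) (j:ℤ) := by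
        rw [neg_inj]
        refine Finset.sum_congr rfl (fun j _ => ?_)
        simp only [dY]
        field_simp

lemma press_total (Nx Ny : ℕ) {h k : ℝ} (hh : h ≠ 0) (hk : k ≠ 0) (P v1 v2 : G)
    (hbc : BC Nx Ny v1 v2) (hdiv : DivFree Nx Ny h k v1 v2) :
    ipTM Nx Ny h k (DX Nx h P) v1 + ipMT Nx Ny h k (DY Ny k P) v2 = 0 := by
  rw [press_x Nx Ny k hh P v1 (fun j => (hbc.1 j).1) (fun j => (hbc.1 j).2),
    press_y Nx Ny h hk P v2 (fun i => (hbc.2.2.2 i).1) (fun i => (hbc.2.2.2 i).2)]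
  rw [Finset.sum_comm (s := Finset.range Ny)]
  rw [← neg_add, ← Finset.sum_add_distrib]
  have : ∀ i ∈ Finset.range Nx, (∑ j ∈ Finset.range Ny,
        h * k * P (i:ℤ) (j:ℤ) * dX h v1 (i:ℤ) (j:ℤ))
      + (∑ j ∈ Finset.range Ny, h * k * P (i:ℤ) (j:ℤ) * dY k v2 (i:ℤ) (j:ℤ)) = 0 := by
    intro i hi
    rw [← Finset.sum_add_distrib]
    refine Finset.sum_eq_zero (fun j hj => ?_)
    have hi' := Finset.mem_range.mp hi
    have hj' := Finset.mem_range.mp hj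
    have hd := hdiv (i:ℤ) (j:ℤ) (by positivity) (by exact_mod_cast hi') (by positivity)
      (by exact_mod_cast hj')
    linear_combination (h * k * P (i:ℤ) (j:ℤ)) * hd
  rw [Finset.sum_congr rfl this]
  simp
lemma kw_pos (Ny : ℕ) {k : ℝ} (hk : 0 < k) (j : ℤ) : 0 < kw Ny k j := by
  unfold kw; split <;> positivity

lemma hw_pos (Nx : ℕ) {h : ℝ} (hh : 0 < h) (i : ℤ) : 0 < hw Nx h i := by
  unfold hw; split <;> positivity

lemma ipM_self_nonneg (Nx Ny : ℕ) {h k : ℝ} (hh : 0 ≤ h) (hk : 0 ≤ k) (f : G) :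
    0 ≤ ipM Nx Ny h k f f := by
  refine Finset.sum_nonneg (fun i _ => Finset.sum_nonneg (fun j _ => ?_))
  have : h * k * f (i:ℤ) (j:ℤ) * f (i:ℤ) (j:ℤ) = (h * k) * (f (i:ℤ) (j:ℤ))^2 := by ring
  rw [this]; positivity

lemma ipTM_self_nonneg (Nx Ny : ℕ) {h k : ℝ} (hh : 0 ≤ h) (hk : 0 ≤ k) (f : G) :
    0 ≤ ipTM Nx Ny h k f f := by
  refine Finset.sum_nonneg (fun i _ => Finset.sum_nonneg (fun j _ => ?_))
  have : h * k * f (i:ℤ) (j:ℤ) * f (i:ℤ) (j:ℤ) = (h * k) * (f (i:ℤ) (j:ℤ))^2 := by ring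
  rw [this]; positivity

lemma ipMT_self_nonneg (Nx Ny : ℕ) {h k : ℝ} (hh : 0 ≤ h) (hk : 0 ≤ k) (f : G) :
    0 ≤ ipMT Nx Ny h k f f := by
  refine Finset.sum_nonneg (fun i _ => Finset.sum_nonneg (fun j _ => ?_))
  have : h * k * f (i:ℤ) (j:ℤ) * f (i:ℤ) (j:ℤ) = (h * k) * (f (i:ℤ) (j:ℤ))^2 := by ring
  rw [this]; positivity

lemma ipTy_self_nonneg (Nx Ny : ℕ) {h k : ℝ} (hh : 0 ≤ h) (hk : 0 < k) (f : G) :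
    0 ≤ ipTy Nx Ny h k f f := by
  refine Finset.sum_nonneg (fun i _ => Finset.sum_nonneg (fun j _ => ?_))
  have hkw := (kw_pos Ny hk (j:ℤ)).le
  have : h * kw Ny k (j:ℤ) * f (i:ℤ) (j:ℤ) * f (i:ℤ) (j:ℤ)
      = (h * kw Ny k (j:ℤ)) * (f (i:ℤ) (j:ℤ))^2 := by ring
  rw [this]
  positivity

lemma ipTx_self_nonneg (Nx Ny : ℕ) {h k : ℝ} (hh : 0 < h) (hk : 0 ≤ k) (f : G) :
    0 ≤ ipTx Nx Ny h k f f := by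
  refine Finset.sum_nonneg (fun i _ => Finset.sum_nonneg (fun j _ => ?_))
  have hhw := (hw_pos Nx hh (i:ℤ)).le
  have : hw Nx h (i:ℤ) * k * f (i:ℤ) (j:ℤ) * f (i:ℤ) (j:ℤ)
      = (hw Nx h (i:ℤ) * k) * (f (i:ℤ) (j:ℤ))^2 := by ring
  rw [this]
  positivity

lemma Dsq_nonneg (Nx Ny : ℕ) {h k : ℝ} (hh : 0 < h) (hk : 0 < k) (v1 v2 : G) :
    0 ≤ Dsq Nx Ny h k v1 v2 := by
  unfold Dsq
  have a1 := ipM_self_nonneg Nx Ny hh.le hk.le (dX h v1)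
  have a2 := ipTy_self_nonneg Nx Ny hh.le hk (DY Ny k v1)
  have a3 := ipTx_self_nonneg Nx Ny hh hk.le (DX Nx h v2)
  have a4 := ipM_self_nonneg Nx Ny hh.le hk.le (dY k v2)
  linarith

lemma poin1 (Nx Ny : ℕ) {Lx h k : ℝ} (hh : 0 < h) (hk : 0 < k) (hLnn : 0 ≤ Lx)
    (hLx : (Nx : ℝ) * h = Lx) (v1 : G) (h0 : ∀ j : ℤ, v1 0 j = 0) :
    ipTM Nx Ny h k v1 v1 ≤ Lx^2 * ipM Nx Ny h k (dX h v1) (dX h v1) := by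
  set S : ℤ → ℝ := fun j => ∑ i' ∈ Finset.range Nx, h * (dX h v1 (i':ℤ) j)^2 with hS
  have hSnn : ∀ j : ℤ, 0 ≤ S j := by
    intro j
    refine Finset.sum_nonneg (fun i' _ => by positivity)
  -- pointwise Poincaré
  have ptw : ∀ i ∈ Finset.Ico 1 Nx, ∀ j : ℤ, (v1 (i:ℤ) j)^2 ≤ Lx * S j := by
    intro i hi j
    obtain ⟨hi1, hi2⟩ := Finset.mem_Ico.mp hi
    have tele : v1 (i:ℤ) j = ∑ i' ∈ Finset.range i, h * dX h v1 (i':ℤ) j := by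
      have t1 : ∑ i' ∈ Finset.range i, (v1 ((i':ℤ)+1) j - v1 (i':ℤ) j)
          = v1 (i:ℤ) j - v1 0 j := by
        have := Finset.sum_range_sub (f := fun i' => v1 (i':ℤ) j) i
        simpa [Nat.cast_succ] using this
      rw [h0 j, sub_zero] at t1
      rw [← t1]
      refine Finset.sum_congr rfl (fun i' _ => ?_)
      simp only [dX]
      field_simp
    have cs : (∑ i' ∈ Finset.range i, h * dX h v1 (i':ℤ) j)^2
        ≤ (Finset.range i).card * ∑ i' ∈ Finset.range i, (h * dX h v1 (i':ℤ) j)^2 :=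
      sq_sum_le_card_mul_sum_sq
    have sub : ∑ i' ∈ Finset.range i, (h * dX h v1 (i':ℤ) j)^2
        ≤ ∑ i' ∈ Finset.range Nx, (h * dX h v1 (i':ℤ) j)^2 :=
      Finset.sum_le_sum_of_subset_of_nonneg
        (Finset.range_subset_range.mpr hi2.le) (fun i' _ _ => by positivity)
    have card_le : ((Finset.range i).card : ℝ) ≤ (Nx : ℝ) := by
      simp only [Finset.card_range]
      exact_mod_cast hi2.le
    have step : ((Finset.range i).card : ℝ) * ∑ i' ∈ Finset.range i, (h * dX h v1 (i':ℤ) j)^2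
        ≤ (Nx : ℝ) * ∑ i' ∈ Finset.range Nx, (h * dX h v1 (i':ℤ) j)^2 := by
      refine mul_le_mul card_le sub (Finset.sum_nonneg (fun i' _ => by positivity))
        (by positivity)
    have rweq : (Nx : ℝ) * ∑ i' ∈ Finset.range Nx, (h * dX h v1 (i':ℤ) j)^2 = Lx * S j := by
      rw [hS, Finset.mul_sum, Finset.mul_sum]
      refine Finset.sum_congr rfl (fun i' _ => ?_)
      have : (Nx:ℝ) * (h * dX h v1 (i':ℤ) j)^2 = ((Nx:ℝ)*h) * (h * (dX h v1 (i':ℤ) j)^2) := by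
        ring
      rw [this, hLx]
    calc (v1 (i:ℤ) j)^2 = (∑ i' ∈ Finset.range i, h * dX h v1 (i':ℤ) j)^2 := by rw [tele]
      _ ≤ (Finset.range i).card * ∑ i' ∈ Finset.range i, (h * dX h v1 (i':ℤ) j)^2 := cs
      _ ≤ (Nx : ℝ) * ∑ i' ∈ Finset.range Nx, (h * dX h v1 (i':ℤ) j)^2 := step
      _ = Lx * S j := rweq
  have step1 : ipTM Nx Ny h k v1 v1
      ≤ ∑ i ∈ Finset.Ico 1 Nx, ∑ j ∈ Finset.range Ny, h * k * (Lx * S (j:ℤ)) := by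
    unfold ipTM
    refine Finset.sum_le_sum (fun i hi => Finset.sum_le_sum (fun j _ => ?_))
    have hp := ptw i hi (j:ℤ)
    nlinarith [mul_pos hh hk]
  have step2 : ∑ i ∈ Finset.Ico 1 Nx, ∑ j ∈ Finset.range Ny, h * k * (Lx * S (j:ℤ))
      ≤ (Nx:ℝ) * ∑ j ∈ Finset.range Ny, h * k * (Lx * S (j:ℤ)) := by
    rw [Finset.sum_const, nsmul_eq_mul]
    have hcard : ((Finset.Ico 1 Nx).card : ℝ) ≤ (Nx:ℝ) := by
      rw [Nat.card_Ico]
      exact_mod_cast Nat.sub_le Nx 1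
    have hnn : 0 ≤ ∑ j ∈ Finset.range Ny, h * k * (Lx * S (j:ℤ)) := by
      refine Finset.sum_nonneg (fun j _ => ?_)
      have := hSnn (j:ℤ)
      positivity
    exact mul_le_mul_of_nonneg_right hcard hnn |>.trans_eq rfl
  have step3 : (Nx:ℝ) * ∑ j ∈ Finset.range Ny, h * k * (Lx * S (j:ℤ))
      = Lx^2 * ipM Nx Ny h k (dX h v1) (dX h v1) := by
    unfold ipM
    rw [Finset.sum_comm (s := Finset.range Nx)]
    simp only [hS, Finset.mul_sum]
    refine Finset.sum_congr rfl (fun j _ => Finset.sum_congr rfl (fun i' _ => ?_))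
    rw [← hLx]
    ring
  calc ipTM Nx Ny h k v1 v1 ≤ _ := step1
    _ ≤ _ := step2
    _ = _ := step3
lemma poin2 (Nx Ny : ℕ) {Ly h k : ℝ} (hh : 0 < h) (hk : 0 < k) (hLnn : 0 ≤ Ly)
    (hLy : (Ny : ℝ) * k = Ly) (v2 : G) (h0 : ∀ i : ℤ, v2 i 0 = 0) :
    ipMT Nx Ny h k v2 v2 ≤ Ly^2 * ipM Nx Ny h k (dY k v2) (dY k v2) := by
  set S : ℤ → ℝ := fun i => ∑ j' ∈ Finset.range Ny, k * (dY k v2 i (j':ℤ))^2 with hS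
  have hSnn : ∀ i : ℤ, 0 ≤ S i := by
    intro i
    refine Finset.sum_nonneg (fun j' _ => by positivity)
  have ptw : ∀ j ∈ Finset.Ico 1 Ny, ∀ i : ℤ, (v2 i (j:ℤ))^2 ≤ Ly * S i := by
    intro j hj i
    obtain ⟨hj1, hj2⟩ := Finset.mem_Ico.mp hj
    have tele : v2 i (j:ℤ) = ∑ j' ∈ Finset.range j, k * dY k v2 i (j':ℤ) := by
      have t1 : ∑ j' ∈ Finset.range j, (v2 i ((j':ℤ)+1) - v2 i (j':ℤ))
          = v2 i (j:ℤ) - v2 i 0 := by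
        have := Finset.sum_range_sub (f := fun j' => v2 i (j':ℤ)) j
        simpa [Nat.cast_succ] using this
      rw [h0 i, sub_zero] at t1
      rw [← t1]
      refine Finset.sum_congr rfl (fun j' _ => ?_)
      simp only [dY]
      field_simp
    have cs : (∑ j' ∈ Finset.range j, k * dY k v2 i (j':ℤ))^2
        ≤ (Finset.range j).card * ∑ j' ∈ Finset.range j, (k * dY k v2 i (j':ℤ))^2 :=
      sq_sum_le_card_mul_sum_sq
    have sub : ∑ j' ∈ Finset.range j, (k * dY k v2 i (j':ℤ))^2
        ≤ ∑ j' ∈ Finset.range Ny, (k * dY k v2 i (j':ℤ))^2 :=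
      Finset.sum_le_sum_of_subset_of_nonneg
        (Finset.range_subset_range.mpr hj2.le) (fun j' _ _ => by positivity)
    have card_le : ((Finset.range j).card : ℝ) ≤ (Ny : ℝ) := by
      simp only [Finset.card_range]
      exact_mod_cast hj2.le
    have step : ((Finset.range j).card : ℝ) * ∑ j' ∈ Finset.range j, (k * dY k v2 i (j':ℤ))^2
        ≤ (Ny : ℝ) * ∑ j' ∈ Finset.range Ny, (k * dY k v2 i (j':ℤ))^2 := by
      refine mul_le_mul card_le sub (Finset.sum_nonneg (fun j' _ => by positivity))
        (by positivity)
    have rweq : (Ny : ℝ) * ∑ j' ∈ Finset.range Ny, (k * dY k v2 i (j':ℤ))^2 = Ly * S i := by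
      rw [hS, Finset.mul_sum, Finset.mul_sum]
      refine Finset.sum_congr rfl (fun j' _ => ?_)
      rw [← hLy]
      ring
    calc (v2 i (j:ℤ))^2 = (∑ j' ∈ Finset.range j, k * dY k v2 i (j':ℤ))^2 := by rw [tele]
      _ ≤ (Finset.range j).card * ∑ j' ∈ Finset.range j, (k * dY k v2 i (j':ℤ))^2 := cs
      _ ≤ (Ny : ℝ) * ∑ j' ∈ Finset.range Ny, (k * dY k v2 i (j':ℤ))^2 := step
      _ = Ly * S i := rweq
  have step1 : ipMT Nx Ny h k v2 v2
      ≤ ∑ i ∈ Finset.range Nx, ∑ j ∈ Finset.Ico 1 Ny, h * k * (Ly * S (i:ℤ)) := by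
    unfold ipMT
    refine Finset.sum_le_sum (fun i _ => Finset.sum_le_sum (fun j hj => ?_))
    have hp := ptw j hj (i:ℤ)
    nlinarith [mul_pos hh hk]
  have step2 : ∑ i ∈ Finset.range Nx, ∑ j ∈ Finset.Ico 1 Ny, h * k * (Ly * S (i:ℤ))
      ≤ ∑ i ∈ Finset.range Nx, (Ny:ℝ) * (h * k * (Ly * S (i:ℤ))) := by
    refine Finset.sum_le_sum (fun i _ => ?_)
    rw [Finset.sum_const, nsmul_eq_mul]
    have hcard : ((Finset.Ico 1 Ny).card : ℝ) ≤ (Ny:ℝ) := by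
      rw [Nat.card_Ico]
      exact_mod_cast Nat.sub_le Ny 1
    have hnn : 0 ≤ h * k * (Ly * S (i:ℤ)) := by
      have := hSnn (i:ℤ)
      positivity
    exact mul_le_mul_of_nonneg_right hcard hnn
  have step3 : ∑ i ∈ Finset.range Nx, (Ny:ℝ) * (h * k * (Ly * S (i:ℤ)))
      = Ly^2 * ipM Nx Ny h k (dY k v2) (dY k v2) := by
    unfold ipM
    simp only [hS, Finset.mul_sum]
    refine Finset.sum_congr rfl (fun i _ => Finset.sum_congr rfl (fun j' _ => ?_))
    rw [← hLy]
    ring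
  calc ipMT Nx Ny h k v2 v2 ≤ _ := step1
    _ ≤ _ := step2
    _ = _ := step3
lemma step_energy (Nx Ny : ℕ) {h k Δt δ : ℝ} (ν : ℝ) (hh : 0 < h) (hk : 0 < k)
    (hΔt : Δt ≠ 0) (hδ : 0 < δ)
    (f1 f2 w1 w2 u1 u2 v1 v2 P : G) (Qn Qn1 : ℝ)
    (hubc : BC Nx Ny u1 u2) (hudiv : DivFree Nx Ny h k u1 u2)
    (hs : SchemeStep Nx Ny h k Δt ν δ f1 f2 w1 w2 u1 u2 v1 v2 P Qn Qn1) :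
    Qn1^2 - Qn^2
      = Δt * (ipl2 Nx Ny h k f1 f2 (fun a b => (u1 a b + v1 a b) / 2)
            (fun a b => (u2 a b + v2 a b) / 2)
          - ν * Dsq Nx Ny h k (fun a b => (u1 a b + v1 a b) / 2)
            (fun a b => (u2 a b + v2 a b) / 2)) := by
  obtain ⟨hQ, hm1, hm2, hq, hvdiv, hvbc⟩ := hs
  set B := Bh Nx Ny h k δ w1 w2 with hBdef
  set S := (Qn + Qn1) / 2 with hSdef
  set V1 : G := fun a b => (u1 a b + v1 a b) / 2 with hV1
  set V2 : G := fun a b => (u2 a b + v2 a b) / 2 with hV2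
  have hB : 0 < B := by
    rw [hBdef]
    unfold Bh
    have h1 := ipTM_self_nonneg Nx Ny hh.le hk.le w1
    have h2 := ipMT_self_nonneg Nx Ny hh.le hk.le w2
    have : 0 < l2sq Nx Ny h k w1 w2 / 2 + δ := by
      unfold l2sq; linarith
    exact Real.sqrt_pos.mpr this
  -- boundary conditions for the midpoint velocity
  have hV1a : ∀ j : ℤ, V1 0 j = 0 := fun j => by
    simp [hV1, (hubc.1 j).1, (hvbc.1 j).1]
  have hV1b : ∀ j : ℤ, V1 (Nx:ℤ) j = 0 := fun j => by
    simp [hV1, (hubc.1 j).2, (hvbc.1 j).2]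
  have hV1c : ∀ i : ℤ, V1 i (-1) = 0 := fun i => by
    simp [hV1, (hubc.2.1 i).1, (hvbc.2.1 i).1]
  have hV1d : ∀ i : ℤ, V1 i (Ny:ℤ) = 0 := fun i => by
    simp [hV1, (hubc.2.1 i).2, (hvbc.2.1 i).2]
  have hV2a : ∀ j : ℤ, V2 (-1) j = 0 := fun j => by
    simp [hV2, (hubc.2.2.1 j).1, (hvbc.2.2.1 j).1]
  have hV2b : ∀ j : ℤ, V2 (Nx:ℤ) j = 0 := fun j => by
    simp [hV2, (hubc.2.2.1 j).2, (hvbc.2.2.1 j).2]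
  have hV2c : ∀ i : ℤ, V2 i 0 = 0 := fun i => by
    simp [hV2, (hubc.2.2.2 i).1, (hvbc.2.2.2 i).1]
  have hV2d : ∀ i : ℤ, V2 i (Ny:ℤ) = 0 := fun i => by
    simp [hV2, (hubc.2.2.2 i).2, (hvbc.2.2.2 i).2]
  have hVbc : BC Nx Ny V1 V2 :=
    ⟨fun j => ⟨hV1a j, hV1b j⟩, fun i => ⟨hV1c i, hV1d i⟩,
     fun j => ⟨hV2a j, hV2b j⟩, fun i => ⟨hV2c i, hV2d i⟩⟩
  have hVdiv : DivFree Nx Ny h k V1 V2 := by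
    intro i j hi hi' hj hj'
    have h1 := hudiv i j hi hi' hj hj'
    have h2 := hvdiv i j hi hi' hj hj'
    simp only [dX, dY, hV1, hV2] at h1 h2 ⊢
    field_simp at h1 h2 ⊢
    linarith
  -- summed momentum equation, first component
  have expand1 : ipTM Nx Ny h k f1 V1
      = ipTM Nx Ny h k (fun a b => (v1 a b - u1 a b) / Δt) V1
        + (S / B) * ipTM Nx Ny h k (N1 Ny h k w1 w2) V1
        - ν * ipTM Nx Ny h k (DXdX h V1) V1
        - ν * ipTM Nx Ny h k (dYDY Ny k V1) V1
        + ipTM Nx Ny h k (DX Nx h P) V1 := by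
    unfold ipTM
    have key : ∀ i ∈ Finset.Ico 1 Nx, ∀ j ∈ Finset.range Ny,
        h * k * f1 (i:ℤ) (j:ℤ) * V1 (i:ℤ) (j:ℤ)
        = h * k * ((v1 (i:ℤ) (j:ℤ) - u1 (i:ℤ) (j:ℤ)) / Δt) * V1 (i:ℤ) (j:ℤ)
          + (S / B) * (h * k * N1 Ny h k w1 w2 (i:ℤ) (j:ℤ) * V1 (i:ℤ) (j:ℤ))
          - ν * (h * k * DXdX h V1 (i:ℤ) (j:ℤ) * V1 (i:ℤ) (j:ℤ))
          - ν * (h * k * dYDY Ny k V1 (i:ℤ) (j:ℤ) * V1 (i:ℤ) (j:ℤ))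
          + h * k * DX Nx h P (i:ℤ) (j:ℤ) * V1 (i:ℤ) (j:ℤ) := by
      intro i hi j hj
      obtain ⟨hi1, hi2⟩ := Finset.mem_Ico.mp hi
      have hj2 := Finset.mem_range.mp hj
      have hm := hm1 (i:ℤ) (j:ℤ) (by exact_mod_cast hi1) (by exact_mod_cast hi2)
        (Int.natCast_nonneg j) (by exact_mod_cast hj2)
      linear_combination (-(h * k * V1 (i:ℤ) (j:ℤ))) * hm
    calc ∑ i ∈ Finset.Ico 1 Nx, ∑ j ∈ Finset.range Ny,
          h * k * f1 (i:ℤ) (j:ℤ) * V1 (i:ℤ) (j:ℤ)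
        = ∑ i ∈ Finset.Ico 1 Nx, ∑ j ∈ Finset.range Ny,
            (h * k * ((v1 (i:ℤ) (j:ℤ) - u1 (i:ℤ) (j:ℤ)) / Δt) * V1 (i:ℤ) (j:ℤ)
            + (S / B) * (h * k * N1 Ny h k w1 w2 (i:ℤ) (j:ℤ) * V1 (i:ℤ) (j:ℤ))
            - ν * (h * k * DXdX h V1 (i:ℤ) (j:ℤ) * V1 (i:ℤ) (j:ℤ))
            - ν * (h * k * dYDY Ny k V1 (i:ℤ) (j:ℤ) * V1 (i:ℤ) (j:ℤ))
            + h * k * DX Nx h P (i:ℤ) (j:ℤ) * V1 (i:ℤ) (j:ℤ)) :=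
          Finset.sum_congr rfl (fun i hi => Finset.sum_congr rfl (fun j hj => key i hi j hj))
      _ = _ := by
          simp only [Finset.sum_add_distrib, Finset.sum_sub_distrib, ← Finset.mul_sum]
  -- summed momentum equation, second component
  have expand2 : ipMT Nx Ny h k f2 V2
      = ipMT Nx Ny h k (fun a b => (v2 a b - u2 a b) / Δt) V2
        + (S / B) * ipMT Nx Ny h k (N2 Nx h k w1 w2) V2
        - ν * ipMT Nx Ny h k (DYdY k V2) V2
        - ν * ipMT Nx Ny h k (dXDX Nx h V2) V2
        + ipMT Nx Ny h k (DY Ny k P) V2 := by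
    unfold ipMT
    have key : ∀ i ∈ Finset.range Nx, ∀ j ∈ Finset.Ico 1 Ny,
        h * k * f2 (i:ℤ) (j:ℤ) * V2 (i:ℤ) (j:ℤ)
        = h * k * ((v2 (i:ℤ) (j:ℤ) - u2 (i:ℤ) (j:ℤ)) / Δt) * V2 (i:ℤ) (j:ℤ)
          + (S / B) * (h * k * N2 Nx h k w1 w2 (i:ℤ) (j:ℤ) * V2 (i:ℤ) (j:ℤ))
          - ν * (h * k * DYdY k V2 (i:ℤ) (j:ℤ) * V2 (i:ℤ) (j:ℤ))
          - ν * (h * k * dXDX Nx h V2 (i:ℤ) (j:ℤ) * V2 (i:ℤ) (j:ℤ))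
          + h * k * DY Ny k P (i:ℤ) (j:ℤ) * V2 (i:ℤ) (j:ℤ) := by
      intro i hi j hj
      have hi2 := Finset.mem_range.mp hi
      obtain ⟨hj1, hj2⟩ := Finset.mem_Ico.mp hj
      have hm := hm2 (i:ℤ) (j:ℤ) (Int.natCast_nonneg i) (by exact_mod_cast hi2)
        (by exact_mod_cast hj1) (by exact_mod_cast hj2)
      linear_combination (-(h * k * V2 (i:ℤ) (j:ℤ))) * hm
    calc ∑ i ∈ Finset.range Nx, ∑ j ∈ Finset.Ico 1 Ny,
          h * k * f2 (i:ℤ) (j:ℤ) * V2 (i:ℤ) (j:ℤ)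
        = ∑ i ∈ Finset.range Nx, ∑ j ∈ Finset.Ico 1 Ny,
            (h * k * ((v2 (i:ℤ) (j:ℤ) - u2 (i:ℤ) (j:ℤ)) / Δt) * V2 (i:ℤ) (j:ℤ)
            + (S / B) * (h * k * N2 Nx h k w1 w2 (i:ℤ) (j:ℤ) * V2 (i:ℤ) (j:ℤ))
            - ν * (h * k * DYdY k V2 (i:ℤ) (j:ℤ) * V2 (i:ℤ) (j:ℤ))
            - ν * (h * k * dXDX Nx h V2 (i:ℤ) (j:ℤ) * V2 (i:ℤ) (j:ℤ))
            + h * k * DY Ny k P (i:ℤ) (j:ℤ) * V2 (i:ℤ) (j:ℤ)) :=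
          Finset.sum_congr rfl (fun i hi => Finset.sum_congr rfl (fun j hj => key i hi j hj))
      _ = _ := by
          simp only [Finset.sum_add_distrib, Finset.sum_sub_distrib, ← Finset.mul_sum]
  -- summation by parts for the viscous and pressure terms
  have va := visc_x Nx Ny k hh.ne' V1 hV1a hV1b
  have vb := visc_y1 Nx Ny h hk.ne' V1 hV1c hV1d
  have vc := visc_y2 Nx Ny h hk.ne' V2 hV2c hV2d
  have vd := visc_x2 Nx Ny k hh.ne' V2 hV2a hV2b
  have pr := press_total Nx Ny hh.ne' hk.ne' P V1 V2 hVbc hVdiv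
  -- combined tested momentum identity
  have hcomb : ipl2 Nx Ny h k f1 f2 V1 V2
      = ipl2 Nx Ny h k (fun a b => (v1 a b - u1 a b) / Δt)
          (fun a b => (v2 a b - u2 a b) / Δt) V1 V2
        + (S / B) * ipl2 Nx Ny h k (N1 Ny h k w1 w2) (N2 Nx h k w1 w2) V1 V2
        + ν * Dsq Nx Ny h k V1 V2 := by
    unfold ipl2 Dsq
    unfold ipl2 at *
    rw [expand1, expand2]
    rw [va, vb, vc, vd] at *
    linarith [pr]
  -- the SAV relation, multiplied by Δt (Qn + Qn1)
  set X := ipl2 Nx Ny h k (N1 Ny h k w1 w2) (N2 Nx h k w1 w2) V1 V2 with hX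
  set Y := ipl2 Nx Ny h k (fun a b => (v1 a b - u1 a b) / Δt)
      (fun a b => (v2 a b - u2 a b) / Δt) V1 V2 with hY
  have e1 : Qn1^2 - Qn^2 = (Δt * (2 * S)) * ((Qn1 - Qn) / Δt) := by
    rw [hSdef]
    field_simp
    ring
  rw [hq] at e1
  have e2 : (Δt * (2 * S)) * (1 / (2 * B) * X + 1 / (2 * S) * Y)
      = Δt * ((S / B) * X + Y) := by
    field_simp
  rw [e2] at e1
  have hYval : Y = ipl2 Nx Ny h k f1 f2 V1 V2 - (S / B) * X - ν * Dsq Nx Ny h k V1 V2 := by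
    rw [hcomb]; ring
  rw [e1, hYval]
  ring
lemma young_scalar {ε : ℝ} (hε : 0 < ε) (x y : ℝ) :
    x * y ≤ 1/(2*ε) * (x*x) + ε/2 * (y*y) := by
  rw [← sub_nonneg]
  have hne : (2:ℝ)*ε ≠ 0 := by positivity
  have : 1/(2*ε) * (x*x) + ε/2 * (y*y) - x*y = (x - ε*y)^2 / (2*ε) := by
    field_simp
    ring
  rw [this]
  positivity

lemma young_TM (Nx Ny : ℕ) {h k ε : ℝ} (hh : 0 < h) (hk : 0 < k) (hε : 0 < ε) (f g : G) :
    ipTM Nx Ny h k f g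
      ≤ 1/(2*ε) * ipTM Nx Ny h k f f + ε/2 * ipTM Nx Ny h k g g := by
  unfold ipTM
  calc ∑ i ∈ Finset.Ico 1 Nx, ∑ j ∈ Finset.range Ny,
        h * k * f (i:ℤ) (j:ℤ) * g (i:ℤ) (j:ℤ)
      ≤ ∑ i ∈ Finset.Ico 1 Nx, ∑ j ∈ Finset.range Ny,
          (1/(2*ε) * (h * k * f (i:ℤ) (j:ℤ) * f (i:ℤ) (j:ℤ))
            + ε/2 * (h * k * g (i:ℤ) (j:ℤ) * g (i:ℤ) (j:ℤ))) := by
        refine Finset.sum_le_sum (fun i _ => Finset.sum_le_sum (fun j _ => ?_))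
        have base := mul_le_mul_of_nonneg_left
          (young_scalar hε (f (i:ℤ) (j:ℤ)) (g (i:ℤ) (j:ℤ))) (mul_pos hh hk).le
        calc h * k * f (i:ℤ) (j:ℤ) * g (i:ℤ) (j:ℤ)
            = (h*k) * (f (i:ℤ) (j:ℤ) * g (i:ℤ) (j:ℤ)) := by ring
          _ ≤ (h*k) * (1/(2*ε) * (f (i:ℤ) (j:ℤ) * f (i:ℤ) (j:ℤ))
                + ε/2 * (g (i:ℤ) (j:ℤ) * g (i:ℤ) (j:ℤ))) := base
          _ = 1/(2*ε) * (h * k * f (i:ℤ) (j:ℤ) * f (i:ℤ) (j:ℤ))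
                + ε/2 * (h * k * g (i:ℤ) (j:ℤ) * g (i:ℤ) (j:ℤ)) := by ring
    _ = 1/(2*ε) * (∑ i ∈ Finset.Ico 1 Nx, ∑ j ∈ Finset.range Ny,
            h * k * f (i:ℤ) (j:ℤ) * f (i:ℤ) (j:ℤ))
          + ε/2 * (∑ i ∈ Finset.Ico 1 Nx, ∑ j ∈ Finset.range Ny,
            h * k * g (i:ℤ) (j:ℤ) * g (i:ℤ) (j:ℤ)) := by
        simp only [Finset.sum_add_distrib, ← Finset.mul_sum]

lemma young_MT (Nx Ny : ℕ) {h k ε : ℝ} (hh : 0 < h) (hk : 0 < k) (hε : 0 < ε) (f g : G) :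
    ipMT Nx Ny h k f g
      ≤ 1/(2*ε) * ipMT Nx Ny h k f f + ε/2 * ipMT Nx Ny h k g g := by
  unfold ipMT
  calc ∑ i ∈ Finset.range Nx, ∑ j ∈ Finset.Ico 1 Ny,
        h * k * f (i:ℤ) (j:ℤ) * g (i:ℤ) (j:ℤ)
      ≤ ∑ i ∈ Finset.range Nx, ∑ j ∈ Finset.Ico 1 Ny,
          (1/(2*ε) * (h * k * f (i:ℤ) (j:ℤ) * f (i:ℤ) (j:ℤ))
            + ε/2 * (h * k * g (i:ℤ) (j:ℤ) * g (i:ℤ) (j:ℤ))) := by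
        refine Finset.sum_le_sum (fun i _ => Finset.sum_le_sum (fun j _ => ?_))
        have base := mul_le_mul_of_nonneg_left
          (young_scalar hε (f (i:ℤ) (j:ℤ)) (g (i:ℤ) (j:ℤ))) (mul_pos hh hk).le
        calc h * k * f (i:ℤ) (j:ℤ) * g (i:ℤ) (j:ℤ)
            = (h*k) * (f (i:ℤ) (j:ℤ) * g (i:ℤ) (j:ℤ)) := by ring
          _ ≤ (h*k) * (1/(2*ε) * (f (i:ℤ) (j:ℤ) * f (i:ℤ) (j:ℤ))
                + ε/2 * (g (i:ℤ) (j:ℤ) * g (i:ℤ) (j:ℤ))) := base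
          _ = 1/(2*ε) * (h * k * f (i:ℤ) (j:ℤ) * f (i:ℤ) (j:ℤ))
                + ε/2 * (h * k * g (i:ℤ) (j:ℤ) * g (i:ℤ) (j:ℤ)) := by ring
    _ = 1/(2*ε) * (∑ i ∈ Finset.range Nx, ∑ j ∈ Finset.Ico 1 Ny,
            h * k * f (i:ℤ) (j:ℤ) * f (i:ℤ) (j:ℤ))
          + ε/2 * (∑ i ∈ Finset.range Nx, ∑ j ∈ Finset.Ico 1 Ny,
            h * k * g (i:ℤ) (j:ℤ) * g (i:ℤ) (j:ℤ)) := by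
        simp only [Finset.sum_add_distrib, ← Finset.mul_sum]

lemma young_l2 (Nx Ny : ℕ) {h k ε : ℝ} (hh : 0 < h) (hk : 0 < k) (hε : 0 < ε)
    (f1 f2 g1 g2 : G) :
    ipl2 Nx Ny h k f1 f2 g1 g2
      ≤ 1/(2*ε) * l2sq Nx Ny h k f1 f2 + ε/2 * l2sq Nx Ny h k g1 g2 := by
  unfold ipl2 l2sq
  have a := young_TM Nx Ny hh hk hε f1 g1
  have b := young_MT Nx Ny hh hk hε f2 g2
  linarith

lemma poin_total (Nx Ny : ℕ) {Lx Ly h k : ℝ} (hh : 0 < h) (hk : 0 < k)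
    (hLxp : 0 < Lx) (hLyp : 0 < Ly)
    (hLx : (Nx : ℝ) * h = Lx) (hLy : (Ny : ℝ) * k = Ly) (v1 v2 : G)
    (h10 : ∀ j : ℤ, v1 0 j = 0) (h20 : ∀ i : ℤ, v2 i 0 = 0) :
    l2sq Nx Ny h k v1 v2 ≤ max (Lx^2) (Ly^2) * Dsq Nx Ny h k v1 v2 := by
  have p1 := poin1 Nx Ny hh hk hLxp.le hLx v1 h10
  have p2 := poin2 Nx Ny hh hk hLyp.le hLy v2 h20
  have hM : 0 ≤ max (Lx^2) (Ly^2) := le_max_of_le_left (by positivity)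
  have e1 : Lx^2 ≤ max (Lx^2) (Ly^2) := le_max_left _ _
  have e2 : Ly^2 ≤ max (Lx^2) (Ly^2) := le_max_right _ _
  have n1 := ipM_self_nonneg Nx Ny hh.le hk.le (dX h v1)
  have n2 := ipTy_self_nonneg Nx Ny hh.le hk (DY Ny k v1)
  have n3 := ipTx_self_nonneg Nx Ny hh hk.le (DX Nx h v2)
  have n4 := ipM_self_nonneg Nx Ny hh.le hk.le (dY k v2)
  unfold l2sq Dsq
  have b1 : Lx^2 * ipM Nx Ny h k (dX h v1) (dX h v1)
      ≤ max (Lx^2) (Ly^2) * ipM Nx Ny h k (dX h v1) (dX h v1) :=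
    mul_le_mul_of_nonneg_right e1 n1
  have b2 : Ly^2 * ipM Nx Ny h k (dY k v2) (dY k v2)
      ≤ max (Lx^2) (Ly^2) * ipM Nx Ny h k (dY k v2) (dY k v2) :=
    mul_le_mul_of_nonneg_right e2 n4
  nlinarith [mul_nonneg hM n2, mul_nonneg hM n3]

end SAVMAC

/-- **Uniform boundedness of the auxiliary variable** (estimate (3.30) and (3.31)): there is
a constant `C` depending only on `ν` and the domain `Ω` (through the discrete Poincaré
inequality) such that, for any mesh `h, k` with `N_x h = L_x`, `N_y k = L_y`, any `Δt = T/N`,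
and any solution of the fully discrete SAV-MAC scheme,
`|Q^{n+1}|² + (ν/2) Σ_{m=0}^{n} Δt ‖DU^{m+1/2}‖² ≤ |Q⁰|² + C Σ_{m=0}^{n} Δt ‖f^{m+1/2}‖²_{l²}`
for all `0 ≤ n ≤ N-1`; in particular `|Q^{n+1}|` is bounded independently of `h`, `k`, `Δt`
and `n`. -/
theorem SAVMAC.Q_uniform_bound (Lx Ly ν T : ℝ) (hLx : 0 < Lx) (hLy : 0 < Ly)
    (hν : 0 < ν) (hT : 0 < T) :
    ∃ C : ℝ, 0 < C ∧
      ∀ (Nx Ny N : ℕ) (h k Δt δ : ℝ),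
        1 ≤ Nx → 1 ≤ Ny → 1 ≤ N → 0 < h → 0 < k → 0 < δ →
        (Nx : ℝ) * h = Lx → (Ny : ℝ) * k = Ly → Δt = T / N →
        ∀ (U1 U2 W1 W2 P f1 f2 : ℕ → SAVMAC.G) (Q : ℕ → ℝ),
          SAVMAC.BC Nx Ny (U1 0) (U2 0) →
          SAVMAC.DivFree Nx Ny h k (U1 0) (U2 0) →
          (∀ n : ℕ, 1 ≤ n →
            W1 n = (fun i j => (3 * U1 n i j - U1 (n - 1) i j) / 2) ∧
            W2 n = (fun i j => (3 * U2 n i j - U2 (n - 1) i j) / 2)) →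
          (∀ n < N, SAVMAC.SchemeStep Nx Ny h k Δt ν δ (f1 n) (f2 n) (W1 n) (W2 n)
            (U1 n) (U2 n) (U1 (n + 1)) (U2 (n + 1)) (P n) (Q n) (Q (n + 1))) →
          ∀ n < N,
            |Q (n + 1)| ^ 2
              + ν / 2 * ∑ m ∈ Finset.range (n + 1),
                  Δt * SAVMAC.Dsq Nx Ny h k
                    (fun i j => (U1 m i j + U1 (m + 1) i j) / 2)
                    (fun i j => (U2 m i j + U2 (m + 1) i j) / 2)
              ≤ |Q 0| ^ 2
                + C * ∑ m ∈ Finset.range (n + 1),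
                    Δt * SAVMAC.l2sq Nx Ny h k (f1 m) (f2 m) := by
  classical
  set CP2 := max (Lx^2) (Ly^2) with hCP2
  have hCP2pos : 0 < CP2 := lt_max_of_lt_left (by positivity)
  refine ⟨CP2 / (2*ν), by positivity, ?_⟩
  intro Nx Ny N h k Δt δ hNx hNy hN hh hk hδ hLxe hLye hΔte
  intro U1 U2 W1 W2 P f1 f2 Q hbc0 hdiv0 _hW hstep n hnN
  have hNpos : (0:ℝ) < (N:ℝ) := by exact_mod_cast hN
  have hΔt : 0 < Δt := by rw [hΔte]; positivity
  set ε := ν / CP2 with hε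
  have hεpos : 0 < ε := by positivity
  have hBD : ∀ m : ℕ, m ≤ N →
      SAVMAC.BC Nx Ny (U1 m) (U2 m) ∧ SAVMAC.DivFree Nx Ny h k (U1 m) (U2 m) := by
    intro m hm
    cases m with
    | zero => exact ⟨hbc0, hdiv0⟩
    | succ m' =>
      have hs := hstep m' (by omega)
      exact ⟨hs.2.2.2.2.2, hs.2.2.2.2.1⟩
  have key : ∀ m, m < N →
      Q (m+1)^2 - Q m^2 + ν/2 * (Δt * SAVMAC.Dsq Nx Ny h k
          (fun i j => (U1 m i j + U1 (m+1) i j) / 2)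
          (fun i j => (U2 m i j + U2 (m+1) i j) / 2))
        ≤ CP2/(2*ν) * (Δt * SAVMAC.l2sq Nx Ny h k (f1 m) (f2 m)) := by
    intro m hm
    have hs := hstep m hm
    have hid := SAVMAC.step_energy Nx Ny ν hh hk hΔt.ne' hδ (f1 m) (f2 m) (W1 m) (W2 m)
      (U1 m) (U2 m) (U1 (m+1)) (U2 (m+1)) (P m) (Q m) (Q (m+1))
      (hBD m (by omega)).1 (hBD m (by omega)).2 hs
    set V1 : SAVMAC.G := fun a b => (U1 m a b + U1 (m+1) a b) / 2 with hV1
    set V2 : SAVMAC.G := fun a b => (U2 m a b + U2 (m+1) a b) / 2 with hV2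
    have hyoung := SAVMAC.young_l2 Nx Ny hh hk hεpos (f1 m) (f2 m) V1 V2
    have hbcm := (hBD m (by omega)).1
    have hbcm1 := (hBD (m+1) (by omega)).1
    have h10 : ∀ j : ℤ, V1 0 j = 0 := fun j => by
      simp [hV1, (hbcm.1 j).1, (hbcm1.1 j).1]
    have h20 : ∀ i : ℤ, V2 i 0 = 0 := fun i => by
      simp [hV2, (hbcm.2.2.2 i).1, (hbcm1.2.2.2 i).1]
    have hpoin := SAVMAC.poin_total Nx Ny hh hk hLx hLy hLxe hLye V1 V2 h10 h20
    have hCPne : CP2 ≠ 0 := hCP2pos.ne'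
    have e1 : 1/(2*ε) = CP2/(2*ν) := by
      rw [hε]
      field_simp
    have e2 : ε/2 * CP2 = ν/2 := by
      rw [hε]
      field_simp
    have hmul := mul_le_mul_of_nonneg_left hpoin (by positivity : (0:ℝ) ≤ ε/2)
    have e3 : ε/2 * (CP2 * SAVMAC.Dsq Nx Ny h k V1 V2)
        = ν/2 * SAVMAC.Dsq Nx Ny h k V1 V2 := by
      rw [← mul_assoc, e2]
    have hb : SAVMAC.ipl2 Nx Ny h k (f1 m) (f2 m) V1 V2
        ≤ CP2/(2*ν) * SAVMAC.l2sq Nx Ny h k (f1 m) (f2 m)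
          + ν/2 * SAVMAC.Dsq Nx Ny h k V1 V2 := by
      rw [e1] at hyoung
      linarith [e3 ▸ hmul]
    have hstep2 : SAVMAC.ipl2 Nx Ny h k (f1 m) (f2 m) V1 V2
        - ν * SAVMAC.Dsq Nx Ny h k V1 V2
        ≤ CP2/(2*ν) * SAVMAC.l2sq Nx Ny h k (f1 m) (f2 m)
          - ν/2 * SAVMAC.Dsq Nx Ny h k V1 V2 := by linarith
    have hfin := mul_le_mul_of_nonneg_left hstep2 hΔt.le
    rw [hid]
    nlinarith [hfin]
  have tele : ∑ m ∈ Finset.range (n+1), (Q (m+1)^2 - Q m^2) = Q (n+1)^2 - Q 0^2 :=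
    Finset.sum_range_sub (fun m => Q m ^ 2) (n+1)
  have hsum : ∑ m ∈ Finset.range (n+1), (Q (m+1)^2 - Q m^2 + ν/2 * (Δt * SAVMAC.Dsq Nx Ny h k
          (fun i j => (U1 m i j + U1 (m+1) i j) / 2)
          (fun i j => (U2 m i j + U2 (m+1) i j) / 2)))
      ≤ ∑ m ∈ Finset.range (n+1), CP2/(2*ν) * (Δt * SAVMAC.l2sq Nx Ny h k (f1 m) (f2 m)) :=
    Finset.sum_le_sum (fun m hm => key m (by
      have := Finset.mem_range.mp hm
      omega))
  rw [Finset.sum_add_distrib, tele] at hsum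
  have ha1 : |Q (n+1)|^2 = Q (n+1)^2 := sq_abs _
  have ha2 : |Q 0|^2 = Q 0^2 := sq_abs _
  rw [ha1, ha2, Finset.mul_sum, Finset.mul_sum]
  linarith [hsum]
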